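/- In the late-preemption causal model with binary endogenous variables ST, BT, SH, BH, BS, equations BS = BH ∨ SH, SH = ST, BH = BT ∧ ¬SH, and a context u in which ST=1 and BT=1, it holds that ST=1 does not BV-cause BS=1 w.r.t. (M,u): ST=1 NESS-causes BS=1, but for every value c' ∈ {0,1}, ST=c' NESS-causes BS=1 w.r.t. (M_{ST←c'},u). -/
import Mathlib


/-!
Structural equation models (causal models) à la Pearl/Halpern, formalizing
Beckers' "The Counterfactual NESS Definition of Causation".

A causal model over a context type `Ctx` (settings of the exogenous variables),
endogenous variables `V` and values `Val` consists of finite nonempty ranges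
`R X`, structural equations `F X`, and a strong-recursiveness (acyclicity)
witness: an order `ord` such that `F X` only depends on variables of lower order.
-/

structure CausalModel (Ctx V Val : Type) where
  R : V → Finset Val
  R_nonempty : ∀ X, (R X).Nonempty
  F : V → Ctx → (V → Val) → Val
  ord : V → ℕ
  F_resp : ∀ X u s s', (∀ Y, ord Y < ord X → s Y = s' Y) → F X u s = F X u s'

namespace CausalModel

variable {Ctx V Val : Type}

/-- The unique solution of the equations in context `u` (it exists and is
unique by strong recursiveness). `(M,u) ⊨ X = x` iff `M.sol u X = x`. -/
noncomputable def sol (M : CausalModel Ctx V Val) (u : Ctx) : V → Val :=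
  fun X =>
    M.F X u (fun Y => if h : M.ord Y < M.ord X then M.sol u Y else (M.R_nonempty Y).choose)
termination_by X => M.ord X
decreasing_by exact h

/-- `M.sol u` indeed solves all the equations. -/
theorem sol_eq (M : CausalModel Ctx V Val) (u : Ctx) (X : V) :
    M.sol u X = M.F X u (M.sol u) := by
  rw [sol]
  exact M.F_resp X u _ _ (fun Y hY => dif_pos hY)

variable [DecidableEq V]

/-- `X⃗ = x⃗` (given by the set `Xs` and the assignment `xs`) is sufficient for
`E = e` w.r.t. `(M, u)`: the equation for `E` outputs `e` on every setting of the
endogenous variables (in their ranges) that agrees with `xs` on `Xs`. -/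
def Sufficient (M : CausalModel Ctx V Val) (u : Ctx) (Xs : Finset V) (xs : V → Val)
    (E : V) (e : Val) : Prop :=
  ∀ s : V → Val, (∀ Y, s Y ∈ M.R Y) → (∀ X ∈ Xs, s X = xs X) → M.F E u s = e

/-- The intervened model `M_{X⃗ ← x⃗}`: the equations of variables in `Xs` are
replaced by the constants given by `xs`. -/
def intervene (M : CausalModel Ctx V Val) (Xs : Finset V) (xs : V → Val) :
    CausalModel Ctx V Val where
  R := M.R
  R_nonempty := M.R_nonempty
  F := fun X u s => if X ∈ Xs then xs X else M.F X u s
  ord := M.ord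
  F_resp := by
    intro X u s s' h
    by_cases hX : X ∈ Xs
    · simp [hX]
    · simpa [hX] using M.F_resp X u s s' h

/-- `W⃗ = w⃗` (given by `Ws, ws`) is a witness for `C = c` directly NESS-causing
`E = e` w.r.t. `(M, u)`: `C = c` and `W⃗ = w⃗` actually hold, `{C = c} ∪ {W⃗ = w⃗}`
is sufficient for `E = e`, and `W⃗ = w⃗` alone is not. -/
def DirectNESSWith (M : CausalModel Ctx V Val) (u : Ctx) (C : V) (c : Val) (E : V) (e : Val)
    (Ws : Finset V) (ws : V → Val) : Prop :=
  M.sol u C = c ∧ (∀ W ∈ Ws, M.sol u W = ws W) ∧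
  M.Sufficient u (insert C Ws) (Function.update ws C c) E e ∧
  ¬ M.Sufficient u Ws ws E e

/-- `C = c` directly NESS-causes `E = e` w.r.t. `(M, u)`. -/
def DirectNESS (M : CausalModel Ctx V Val) (u : Ctx) (C : V) (c : Val) (E : V) (e : Val) :
    Prop :=
  ∃ (Ws : Finset V) (ws : V → Val), M.DirectNESSWith u C c E e Ws ws

/-- `C = c` NESS-causes `E = e` along the path `p = (C₁, …, Cₙ)` w.r.t. `(M, u)`:
there are values `c₁, …, cₙ` such that `C = c` directly NESS-causes `C₁ = c₁`, …,
and `Cₙ = cₙ` directly NESS-causes `E = e`. (A direct NESS-cause is a NESS-cause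
along the empty path.) -/
def NESSAlong (M : CausalModel Ctx V Val) (u : Ctx) (C : V) (c : Val) (p : List V)
    (E : V) (e : Val) : Prop :=
  ∃ cs : List Val, cs.length = p.length ∧
    List.Chain (fun a b => M.DirectNESS u a.1 a.2 b.1 b.2) (C, c) (p.zip cs ++ [(E, e)])

/-- `C = c` NESS-causes `E = e` w.r.t. `(M, u)`: there is a chain of direct
NESS-causes from `C = c` to `E = e`. -/
def NESS (M : CausalModel Ctx V Val) (u : Ctx) (C : V) (c : Val) (E : V) (e : Val) : Prop :=
  ∃ p : List V, M.NESSAlong u C c p E e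

/-- The BV definition: `C = c` NESS-causes `E = e` w.r.t. `(M, u)` and there is a
`c' ∈ R(C)` such that `C = c'` does not NESS-cause `E = e` w.r.t. `(M_{C ← c'}, u)`. -/
def BVCause (M : CausalModel Ctx V Val) (u : Ctx) (C : V) (c : Val) (E : V) (e : Val) :
    Prop :=
  M.NESS u C c E e ∧
    ∃ c' ∈ M.R C, ¬ (M.intervene {C} (fun _ => c')).NESS u C c' E e

/-- The CNESS definition: `C = c` NESS-causes `E = e` along some path `p` w.r.t.
`(M, u)` and there is a `c' ∈ R(C)` such that `C = c'` does not NESS-cause `E = e`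
along any subpath of `p` (a path all of whose variables are in `p`) w.r.t.
`(M_{C ← c'}, u)`. -/
def CNESSCause (M : CausalModel Ctx V Val) (u : Ctx) (C : V) (c : Val) (E : V) (e : Val) :
    Prop :=
  ∃ p : List V, M.NESSAlong u C c p E e ∧
    ∃ c' ∈ M.R C, ∀ p' : List V, (∀ X ∈ p', X ∈ p) →
      ¬ (M.intervene {C} (fun _ => c')).NESSAlong u C c' p' E e

/-- `E = e` is counterfactually dependent on `C = c` w.r.t. `(M, u)`:
`(M,u) ⊨ C = c ∧ E = e` and there is a `c' ∈ R(C)` with `(M,u) ⊨ [C ← c'] ¬(E = e)`. -/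
def CfDep (M : CausalModel Ctx V Val) (u : Ctx) (C : V) (c : Val) (E : V) (e : Val) : Prop :=
  M.sol u C = c ∧ M.sol u E = e ∧
    ∃ c' ∈ M.R C, (M.intervene {C} (fun _ => c')).sol u E ≠ e

/-- `E = e` is counterfactually dependent on `C = c` given the intervention
`X⃗ ← x⃗`: in `M_{X⃗ ← x⃗}` with context `u`, `C = c` and `E = e` hold, and there is
a `c' ∈ R(C)` such that additionally intervening with `C ← c'` makes `E = e` false. -/
def CfDepGiven (M : CausalModel Ctx V Val) (u : Ctx) (Xs : Finset V) (xs : V → Val)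
    (C : V) (c : Val) (E : V) (e : Val) : Prop :=
  (M.intervene Xs xs).sol u C = c ∧ (M.intervene Xs xs).sol u E = e ∧
    ∃ c' ∈ M.R C, ((M.intervene Xs xs).intervene {C} (fun _ => c')).sol u E ≠ e

/-- `Y` is a parent of `X`: the equation `F X` varies with the value of `Y`
for some context and some setting (within the ranges) of the other variables. -/
def Parent (M : CausalModel Ctx V Val) (Y X : V) : Prop :=
  ∃ (u : Ctx) (s : V → Val) (y y' : Val),
    (∀ Z, s Z ∈ M.R Z) ∧ y ∈ M.R Y ∧ y' ∈ M.R Y ∧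
    M.F X u (Function.update s Y y) ≠ M.F X u (Function.update s Y y')

end CausalModel
/-- Variables for the late-preemption model: `ST`, `BT`, `SH`, `BH`, `BS`. -/
inductive VL | ST | BT | SH | BH | BS
deriving DecidableEq

/-- The late-preemption model with equations `BS = BH ∨ SH`, `SH = ST`,
`BH = BT ∧ ¬SH`, in a context where `ST = st0` and `BT = 1`. -/
def ML (st0 : Bool) : CausalModel Unit VL Bool where
  R := fun _ => Finset.univ
  R_nonempty := fun _ => Finset.univ_nonempty
  F := fun X _ s =>
    match X with
    | .ST => st0
    | .BT => true
    | .SH => s .ST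
    | .BH => s .BT && !(s .SH)
    | .BS => s .BH || s .SH
  ord := fun X => match X with | .ST => 0 | .BT => 0 | .SH => 1 | .BH => 2 | .BS => 3
  F_resp := by
    intro X u s s' h
    cases X
    · rfl
    · rfl
    · show s VL.ST = s' VL.ST
      exact h VL.ST (by decide)
    · show (s VL.BT && !(s VL.SH)) = (s' VL.BT && !(s' VL.SH))
      rw [h VL.BT (by decide), h VL.SH (by decide)]
    · show (s VL.BH || s VL.SH) = (s' VL.BH || s' VL.SH)
      rw [h VL.BH (by decide), h VL.SH (by decide)]

section Aux

/-- The intervened late-preemption model. -/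
noncomputable abbrev MI (c' : Bool) : CausalModel Unit VL Bool :=
  (ML true).intervene {VL.ST} (fun _ => c')

lemma MI_F (c' : Bool) (X : VL) (s : VL → Bool) :
    (MI c').F X () s = if X ∈ ({VL.ST} : Finset VL) then c' else (ML true).F X () s := rfl

lemma MI_sol_ST (c' : Bool) : (MI c').sol () VL.ST = c' := by
  rw [CausalModel.sol_eq, MI_F]; simp

lemma MI_sol_BT (c' : Bool) : (MI c').sol () VL.BT = true := by
  rw [CausalModel.sol_eq, MI_F]; simp [ML]

lemma MI_sol_SH (c' : Bool) : (MI c').sol () VL.SH = c' := by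
  rw [CausalModel.sol_eq, MI_F]
  simp only [show (VL.SH ∈ ({VL.ST} : Finset VL)) = False by simp, if_false]
  show (MI c').sol () VL.ST = c'
  exact MI_sol_ST c'

lemma MI_sol_BH (c' : Bool) : (MI c').sol () VL.BH = !c' := by
  rw [CausalModel.sol_eq, MI_F]
  simp only [show (VL.BH ∈ ({VL.ST} : Finset VL)) = False by simp, if_false]
  show ((MI c').sol () VL.BT && !((MI c').sol () VL.SH)) = !c'
  rw [MI_sol_BT, MI_sol_SH]; simp

lemma ML_sol_ST : (ML true).sol () VL.ST = true := by
  rw [CausalModel.sol_eq]; rfl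

lemma ML_sol_BT : (ML true).sol () VL.BT = true := by
  rw [CausalModel.sol_eq]; rfl

lemma ML_sol_SH : (ML true).sol () VL.SH = true := by
  rw [CausalModel.sol_eq]
  show (ML true).sol () VL.ST = true
  exact ML_sol_ST

lemma ML_sol_BH : (ML true).sol () VL.BH = false := by
  rw [CausalModel.sol_eq]
  show ((ML true).sol () VL.BT && !((ML true).sol () VL.SH)) = false
  rw [ML_sol_BT, ML_sol_SH]; rfl

/-- `ST = c` directly NESS-causes `SH = c` in the original model. -/
lemma dn_ST_SH : (ML true).DirectNESS () VL.ST true VL.SH true := by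
  refine ⟨∅, fun _ => false, ML_sol_ST, by simp, ?_, ?_⟩
  · intro s _ hs
    have h := hs VL.ST (by simp)
    show s VL.ST = true
    rw [h]; simp [Function.update]
  · intro h
    have := h (fun _ => false) (fun _ => Finset.mem_univ _) (by simp)
    exact Bool.false_ne_true this

/-- `SH = true` directly NESS-causes `BS = true` in the original model. -/
lemma dn_SH_BS : (ML true).DirectNESS () VL.SH true VL.BS true := by
  refine ⟨∅, fun _ => false, ML_sol_SH, by simp, ?_, ?_⟩
  · intro s _ hs
    have h := hs VL.SH (by simp)
    show (s VL.BH || s VL.SH) = true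
    rw [h]; simp [Function.update]
  · intro h
    have := h (fun _ => false) (fun _ => Finset.mem_univ _) (by simp)
    exact Bool.false_ne_true this

/-- `ST = c'` directly NESS-causes `SH = c'` in the intervened model. -/
lemma dn_MI_ST_SH (c' : Bool) : (MI c').DirectNESS () VL.ST c' VL.SH c' := by
  refine ⟨∅, fun _ => !c', MI_sol_ST c', by simp, ?_, ?_⟩
  · intro s _ hs
    have h := hs VL.ST (by simp)
    show s VL.ST = c'
    rw [h]; simp [Function.update]
  · intro h
    have := h (fun _ => !c') (fun _ => Finset.mem_univ _) (by simp)
    rw [MI_F] at this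
    simp [ML] at this
  -- `F SH` of intervened model on `s` is `s VL.ST` since `SH ∉ {ST}`

/-- `SH = true` directly NESS-causes `BS = true` in the intervened model. -/
lemma dn_MI_SH_BS : (MI true).DirectNESS () VL.SH true VL.BS true := by
  refine ⟨∅, fun _ => false, MI_sol_SH true, by simp, ?_, ?_⟩
  · intro s _ hs
    have h := hs VL.SH (by simp)
    show (s VL.BH || s VL.SH) = true
    rw [h]; simp [Function.update]
  · intro h
    have := h (fun _ => false) (fun _ => Finset.mem_univ _) (by simp)
    exact Bool.false_ne_true this

/-- `SH = false` directly NESS-causes `BH = true` in the intervened model `ST ← false`. -/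
lemma dn_MI_SH_BH : (MI false).DirectNESS () VL.SH false VL.BH true := by
  refine ⟨{VL.BT}, fun _ => true, MI_sol_SH false, ?_, ?_, ?_⟩
  · intro W hW
    rw [Finset.mem_singleton] at hW
    subst hW
    exact MI_sol_BT false
  · intro s _ hs
    have h1 := hs VL.SH (by simp)
    have h2 := hs VL.BT (by simp)
    show (s VL.BT && !(s VL.SH)) = true
    rw [h1, h2]
    simp [Function.update]
  · intro h
    have := h (fun _ => true) (fun _ => Finset.mem_univ _)
      (by intro X hX; rfl)
    rw [MI_F] at this
    simp [ML] at this

/-- `BH = true` directly NESS-causes `BS = true` in the intervened model `ST ← false`. -/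
lemma dn_MI_BH_BS : (MI false).DirectNESS () VL.BH true VL.BS true := by
  refine ⟨∅, fun _ => false, by simpa using MI_sol_BH false, by simp, ?_, ?_⟩
  · intro s _ hs
    have h := hs VL.BH (by simp)
    show (s VL.BH || s VL.SH) = true
    rw [h]; simp [Function.update]
  · intro h
    have := h (fun _ => false) (fun _ => Finset.mem_univ _) (by simp)
    exact Bool.false_ne_true this

end Aux

/-- In the late-preemption model (`BS = BH ∨ SH`, `SH = ST`,
`BH = BT ∧ ¬SH`, context with `ST = 1` and `BT = 1`), `ST = 1` NESS-causes
`BS = 1`, but for every value `c'`, `ST = c'` NESS-causes `BS = 1` w.r.t.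
`(M_{ST ← c'}, u)`, so `ST = 1` does not BV-cause `BS = 1` w.r.t. `(M, u)`. -/
theorem late_preemption_not_bv :
    (ML true).NESS () VL.ST true VL.BS true ∧
      (∀ c' : Bool, ((ML true).intervene {VL.ST} (fun _ => c')).NESS () VL.ST c'
          VL.BS true) ∧
      ¬ (ML true).BVCause () VL.ST true VL.BS true := by
  have h1 : (ML true).NESS () VL.ST true VL.BS true :=
    ⟨[VL.SH], [true], rfl,
      List.Chain.cons dn_ST_SH (List.Chain.cons dn_SH_BS List.Chain.nil)⟩
  have h2 : ∀ c' : Bool, (MI c').NESS () VL.ST c' VL.BS true := by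
    intro c'
    cases c' with
    | true =>
      exact ⟨[VL.SH], [true], rfl,
        List.Chain.cons (dn_MI_ST_SH true) (List.Chain.cons dn_MI_SH_BS List.Chain.nil)⟩
    | false =>
      exact ⟨[VL.SH, VL.BH], [false, true], rfl,
        List.Chain.cons (dn_MI_ST_SH false)
          (List.Chain.cons dn_MI_SH_BH (List.Chain.cons dn_MI_BH_BS List.Chain.nil))⟩
  refine ⟨h1, h2, ?_⟩
  rintro ⟨-, c', -, hn⟩
  exact hn (h2 c')
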